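/- Let Z₀ ∈ M_{2n×n}(ℝ) have rank n, and set μ₀ = 𝕁Z₀Z₀ᵀ and Π₀ = Z₀ᵀ𝕁Z₀. Then the image of the level set {Z ∈ M_{2n×n}(ℝ) : rank Z = n, 𝕁ZZᵀ = μ₀} under the momentum map 𝐌(Z) = Zᵀ𝕁Z is exactly the O(n)-coadjoint orbit {RᵀΠ₀R : R ∈ O(n)} of Π₀. -/

import Mathlib

/-!
Since `𝕁` is invertible, `𝕁ZZᵀ = 𝕁Z₀Z₀ᵀ` means `ZZᵀ = Z₀Z₀ᵀ`. As `Z₀` has independent columns,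
`Z₀ᵀZ₀` is invertible, `R = (Z₀ᵀZ₀)⁻¹Z₀ᵀZ` is orthogonal and `Z = Z₀R`, whence
`𝐌(Z) = Rᵀ𝐌(Z₀)R`. Conversely `Z₀R` lies in the level set for every orthogonal `R`.
-/

open Matrix

/-- The standard symplectic matrix `𝕁 = [[0, I], [−I, 0]]` of size `2n × 2n`. -/
def symplJ (n : ℕ) : Matrix (Fin n ⊕ Fin n) (Fin n ⊕ Fin n) ℝ :=
  Matrix.fromBlocks 0 1 (-1) 0

namespace Matrix

variable {m n : Type*} [Fintype m] [Fintype n] [DecidableEq n]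

theorem isUnit_of_rank_eq_card {K : Type*} [Field K] {A : Matrix n n K}
    (h : A.rank = Fintype.card n) : IsUnit A := by
  rw [← linearIndependent_cols_iff_isUnit, linearIndependent_iff_card_eq_finrank_span]
  exact h.symm.trans A.rank_eq_finrank_span_cols

theorem isUnit_transpose_mul_self_of_rank_eq_card {K : Type*} [Field K] [LinearOrder K]
    [IsStrictOrderedRing K] {A : Matrix m n K}
    (h : A.rank = Fintype.card n) : IsUnit (Aᵀ * A) :=
  isUnit_of_rank_eq_card (by rw [rank_transpose_mul_self, h])

theorem exists_orthogonal_eq_mul_of_mul_transpose_eq [DecidableEq m] {Z Z₀ : Matrix m n ℝ}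
    (h₀ : IsUnit (Z₀ᵀ * Z₀)) (h : Z * Zᵀ = Z₀ * Z₀ᵀ) :
    ∃ R : Matrix n n ℝ, Rᵀ * R = 1 ∧ Z = Z₀ * R := by
  set A := Z₀ᵀ * Z₀ with hA
  have hAdet : IsUnit A.det := (isUnit_iff_isUnit_det A).mp h₀
  have hAsymm : A⁻¹ᵀ = A⁻¹ := by
    rw [transpose_nonsing_inv, hA, transpose_mul, transpose_transpose]
  set R := A⁻¹ * Z₀ᵀ * Z with hR
  -- `Z₀ R` is the orthogonal projection of `Z` onto the column space of `Z₀`, which contains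
  -- the columns of `Z` because `Z Zᵀ = Z₀ Z₀ᵀ`.
  have hproj : Z = Z₀ * R := by
    set Q : Matrix m m ℝ := 1 - Z₀ * A⁻¹ * Z₀ᵀ with hQ
    have hQZ₀ : Q * Z₀ = 0 := by
      rw [hQ, Matrix.sub_mul, Matrix.one_mul, Matrix.mul_assoc, ← hA,
        nonsing_inv_mul_cancel_right _ _ hAdet, sub_self]
    have hQZ : (Q * Z) * (Q * Z)ᵀ = 0 := by
      rw [transpose_mul, ← Matrix.mul_assoc, Matrix.mul_assoc Q, h, ← Matrix.mul_assoc, hQZ₀,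
        Matrix.zero_mul, Matrix.zero_mul]
    rw [← conjTranspose_eq_transpose_of_trivial, self_mul_conjTranspose_eq_zero] at hQZ
    rwa [hQ, Matrix.sub_mul, Matrix.one_mul, sub_eq_zero, Matrix.mul_assoc, Matrix.mul_assoc,
      ← Matrix.mul_assoc A⁻¹, ← hR] at hQZ
  have hRRt : R * Rᵀ = 1 := by
    calc R * Rᵀ = A⁻¹ * Z₀ᵀ * (Z * Zᵀ) * Z₀ * A⁻¹ᵀ := by
          simp only [R, transpose_mul, transpose_transpose, Matrix.mul_assoc]
      _ = A⁻¹ * A * (A * A⁻¹) := by rw [h, hAsymm, hA]; simp only [Matrix.mul_assoc]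
      _ = 1 := by rw [nonsing_inv_mul _ hAdet, mul_nonsing_inv _ hAdet, Matrix.mul_one]
  exact ⟨R, mul_eq_one_comm.mp hRRt, hproj⟩

end Matrix

theorem symplJ_mul_self (n : ℕ) : symplJ n * symplJ n = -1 := by
  rw [symplJ, fromBlocks_multiply, ← fromBlocks_one, fromBlocks_neg]
  simp

theorem isUnit_symplJ (n : ℕ) : IsUnit (symplJ n) :=
  IsUnit.of_mul_eq_one (-symplJ n) (by rw [mul_neg, symplJ_mul_self, neg_neg])

/-- For `Z₀ ∈ M_{2n×n}(ℝ)` of full rank `n`, with `μ₀ = 𝕁Z₀Z₀ᵀ` and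
`Π₀ = Z₀ᵀ𝕁Z₀`, the image of the level set `{Z : rank Z = n, 𝕁ZZᵀ = μ₀}` under the
momentum map `𝐌(Z) = Zᵀ𝕁Z` is exactly the `O(n)`-coadjoint orbit `{RᵀΠ₀R : R ∈ O(n)}`
of `Π₀`. -/
theorem M_image_of_J_level_set_is_coadjoint_orbit
    {n : ℕ} (Z₀ : Matrix (Fin n ⊕ Fin n) (Fin n) ℝ) (hZ₀ : Z₀.rank = n) :
    (fun Z : Matrix (Fin n ⊕ Fin n) (Fin n) ℝ => Zᵀ * symplJ n * Z) ''
        {Z | Z.rank = n ∧ symplJ n * Z * Zᵀ = symplJ n * Z₀ * Z₀ᵀ}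
      = {M | ∃ R : Matrix (Fin n) (Fin n) ℝ,
          Rᵀ * R = 1 ∧ M = Rᵀ * (Z₀ᵀ * symplJ n * Z₀) * R} := by
  have hgram₀ : IsUnit (Z₀ᵀ * Z₀) :=
    isUnit_transpose_mul_self_of_rank_eq_card (by rw [hZ₀, Fintype.card_fin])
  ext M
  constructor
  · rintro ⟨Z, ⟨-, hlevel⟩, rfl⟩
    have hgram : Z * Zᵀ = Z₀ * Z₀ᵀ :=
      (isUnit_symplJ n).mul_left_cancel (by simpa only [Matrix.mul_assoc] using hlevel)
    obtain ⟨R, hR, rfl⟩ := exists_orthogonal_eq_mul_of_mul_transpose_eq hgram₀ hgram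
    exact ⟨R, hR, by simp only [transpose_mul, Matrix.mul_assoc]⟩
  · rintro ⟨R, hR, rfl⟩
    have hRdet : IsUnit R.det := (isUnit_iff_isUnit_det R).mp (IsUnit.of_mul_eq_one_right _ hR)
    refine ⟨Z₀ * R, ⟨?_, ?_⟩, by simp only [transpose_mul, Matrix.mul_assoc]⟩
    · rw [rank_mul_eq_left_of_isUnit_det R Z₀ hRdet, hZ₀]
    · rw [transpose_mul, Matrix.mul_assoc, Matrix.mul_assoc Z₀, ← Matrix.mul_assoc R,
        mul_eq_one_comm.mp hR, Matrix.one_mul, ← Matrix.mul_assoc]
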